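/- Let a ∈ X, let n ≥ 1, and let P ∈ ℚ⟨X⟩ be homogeneous of degree n (a ℚ-linear combination of words of length n) with the coefficient of the word a^n in P equal to zero. If [ι a, P] is a Lie polynomial, then [ι a, P] = −r(P · ι a). -/

import Mathlib

/-!
Setting: `ℚ⟨X⟩ = FreeAlgebra ℚ X`, the free associative `ℚ`-algebra on a type `X` of
non-commuting variables, with the commutator bracket `⁅P,Q⁆ = P*Q - Q*P` and canonical
inclusion `ι = FreeAlgebra.ι ℚ`.  The words (elements of `FreeMonoid X`) form a `ℚ`-basis
`FreeAlgebra.basisFreeMonoid ℚ X` of `ℚ⟨X⟩`.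
-/

/-- The right-normed bracketing of a word:
`[ι x₁,[ι x₂,[…,[ι x_{n−1}, ι xₙ]…]]]`, with the empty word mapped to `0`. -/
noncomputable def rword {X : Type*} : List X → FreeAlgebra ℚ X
  | [] => 0
  | [x] => FreeAlgebra.ι ℚ x
  | x :: y :: ys => ⁅FreeAlgebra.ι ℚ x, rword (y :: ys)⁆

/-- The right-normed bracketing map `r : ℚ⟨X⟩ → ℚ⟨X⟩`: the unique `ℚ`-linear map sending the
basis word `w₁w₂⋯wₙ` to `[ι w₁,[ι w₂,[…,[ι w_{n−1}, ι wₙ]…]]]` (and the empty word `1` to `0`,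
and a single letter `x` to `ι x`). -/
noncomputable def rmap (X : Type*) : FreeAlgebra ℚ X →ₗ[ℚ] FreeAlgebra ℚ X :=
  (FreeAlgebra.basisFreeMonoid ℚ X).constr ℚ fun w => rword w.toList

/-- The coefficient of the word `w` in `P`, with respect to the basis of words of `ℚ⟨X⟩`. -/
noncomputable def coeffWord {X : Type*} (P : FreeAlgebra ℚ X) (w : FreeMonoid X) : ℚ :=
  (FreeAlgebra.basisFreeMonoid ℚ X).repr P w

attribute [local instance 100] LieRing.ofAssociativeRing

/-- `P` is a Lie polynomial: it belongs to the Lie subalgebra of `ℚ⟨X⟩` (under the commutator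
bracket) generated by the image of `ι`, i.e. the smallest `ℚ`-subspace of `ℚ⟨X⟩` containing
`ι(X)` and closed under commutators. -/
def IsLiePolynomial {X : Type*} (P : FreeAlgebra ℚ X) : Prop :=
  P ∈ LieSubalgebra.lieSpan ℚ (FreeAlgebra ℚ X) (Set.range (FreeAlgebra.ι ℚ))

/-- `P` is homogeneous of degree `n`: a `ℚ`-linear combination of words of length `n`. -/
def IsHomogeneous {X : Type*} (n : ℕ) (P : FreeAlgebra ℚ X) : Prop :=
  P ∈ Submodule.span ℚ
    ((fun w : List X => (w.map (FreeAlgebra.ι ℚ)).prod) '' {w : List X | w.length = n})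

/-!
Let `φ : ℚ⟨X⟩ →ₐ End ℚ⟨X⟩` be the algebra map extending `x ↦ ad (ι x)`. It agrees with `ad` on
Lie polynomials, and `φ w (ι a) = r (w a)` for every word `w`, so `r (P ι a) = φ P (ι a)`. For
`Q = [ι a, P]` a Lie polynomial this gives `[Q, ι a] = φ Q (ι a) = [ι a, φ P (ι a)]`, i.e.
`Z = Q + r (P ι a)` commutes with `ι a`.

The specialization `a ↦ T`, other letters `↦ 0`, into `ℚ[T]` kills commutators and sends
`φ P z` to `ε(P)` times the image of `z`, where `ε(P)` is the constant term of `P`, which is zero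
for `n ≥ 1`; so `Z ↦ 0`. Finally, since `Z` commutes with `ι a`, its coefficients at `a w` and
`w a` agree, and its coefficient at `b w` with `b ≠ a` is that of `Z ι a = ι a Z` at `b w a`,
which is zero. Moving leading letters `a` to the end thus kills every coefficient except those
at powers of `a`: `Z` is a polynomial in `ι a`, determined by its image in `ℚ[T]`, so `Z = 0`.
-/

namespace FreeMonoid

variable {α : Type*}

theorem of_mul_ne_one (x : α) (w : FreeMonoid α) : .of x * w ≠ 1 :=
  fun h => of_ne_one x (mul_eq_one'.mp h).1

theorem eq_of_of_mul_eq_of_mul {x y : α} {v w : FreeMonoid α}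
    (h : .of x * v = .of y * w) : x = y :=
  (List.cons.inj (congrArg toList h)).1

theorem eq_pow_or_eq_pow_mul_of_mul (a : α) (w : FreeMonoid α) :
    (∃ m, w = .of a ^ m) ∨ ∃ k b s, b ≠ a ∧ w = .of a ^ k * (.of b * s) := by
  induction w using FreeMonoid.inductionOn' with
  | one => exact .inl ⟨0, rfl⟩
  | of_mul x w ih =>
    rcases eq_or_ne x a with rfl | hx
    · rcases ih with ⟨m, rfl⟩ | ⟨k, b, s, hb, rfl⟩
      · exact .inl ⟨m + 1, (pow_succ' _ _).symm⟩
      · exact .inr ⟨k + 1, b, s, hb, by rw [pow_succ', mul_assoc]⟩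
    · exact .inr ⟨0, x, w, hx, (one_mul _).symm⟩

end FreeMonoid

theorem map_lie_eq_zero {F A B : Type*} [Ring A] [CommRing B] [FunLike F A B]
    [RingHomClass F A B] (f : F) (x y : A) : f ⁅x, y⁆ = 0 := by
  rw [Ring.lie_def, map_sub, map_mul, map_mul, mul_comm, sub_self]

namespace FreeAlgebra

variable {R X : Type*} [CommRing R]

theorem basisFreeMonoid_repr_apply (Z : FreeAlgebra R X) (w : FreeMonoid X) :
    (basisFreeMonoid R X).repr Z w = (equivMonoidAlgebraFreeMonoid Z).coeff w := rfl

theorem equivMonoidAlgebraFreeMonoid_ι (x : X) :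
    equivMonoidAlgebraFreeMonoid (ι R x) = MonoidAlgebra.single (FreeMonoid.of x) 1 := by
  simp [equivMonoidAlgebraFreeMonoid]

theorem basisFreeMonoid_apply (w : FreeMonoid X) :
    basisFreeMonoid R X w = FreeMonoid.lift (ι R) w := by
  simp [basisFreeMonoid, equivMonoidAlgebraFreeMonoid]

theorem basisFreeMonoid_one : basisFreeMonoid R X 1 = 1 := by
  rw [basisFreeMonoid_apply, map_one]

theorem basisFreeMonoid_mul (v w : FreeMonoid X) :
    basisFreeMonoid R X (v * w) = basisFreeMonoid R X v * basisFreeMonoid R X w := by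
  simp only [basisFreeMonoid_apply, map_mul]

theorem basisFreeMonoid_of (x : X) : basisFreeMonoid R X (.of x) = ι R x := by
  rw [basisFreeMonoid_apply, FreeMonoid.lift_eval_of]

theorem repr_ι_mul_of_mul (a : X) (Z : FreeAlgebra R X) (w : FreeMonoid X) :
    (basisFreeMonoid R X).repr (ι R a * Z) (.of a * w) = (basisFreeMonoid R X).repr Z w := by
  rw [basisFreeMonoid_repr_apply, map_mul equivMonoidAlgebraFreeMonoid,
    equivMonoidAlgebraFreeMonoid_ι,
    MonoidAlgebra.coeff_single_mul_eq_mul_coeff w (fun _ _ => mul_right_inj _), one_mul]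
  rfl

theorem repr_mul_ι_mul_of (a : X) (Z : FreeAlgebra R X) (w : FreeMonoid X) :
    (basisFreeMonoid R X).repr (Z * ι R a) (w * .of a) = (basisFreeMonoid R X).repr Z w := by
  rw [basisFreeMonoid_repr_apply, map_mul equivMonoidAlgebraFreeMonoid,
    equivMonoidAlgebraFreeMonoid_ι,
    MonoidAlgebra.coeff_mul_single_eq_coeff_mul w (fun _ _ => mul_left_inj _), mul_one]
  rfl

theorem repr_ι_mul_of_forall_ne {a : X} (Z : FreeAlgebra R X) {w : FreeMonoid X}
    (h : ∀ v, .of a * v ≠ w) : (basisFreeMonoid R X).repr (ι R a * Z) w = 0 := by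
  rw [basisFreeMonoid_repr_apply, map_mul equivMonoidAlgebraFreeMonoid,
    equivMonoidAlgebraFreeMonoid_ι,
    MonoidAlgebra.coeff_single_mul_of_forall_mul_ne _ _ h]

section Centralizer

variable {a : X} {Z : FreeAlgebra R X}

theorem repr_of_mul_eq_repr_mul_of (hZ : Commute (ι R a) Z) (w : FreeMonoid X) :
    (basisFreeMonoid R X).repr Z (.of a * w) = (basisFreeMonoid R X).repr Z (w * .of a) := by
  rw [← repr_mul_ι_mul_of a, ← hZ.eq, mul_assoc, repr_ι_mul_of_mul]

theorem repr_of_mul_eq_zero (hZ : Commute (ι R a) Z) {b : X} (hb : b ≠ a) (s : FreeMonoid X) :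
    (basisFreeMonoid R X).repr Z (.of b * s) = 0 := by
  rw [← repr_mul_ι_mul_of a, ← hZ.eq, mul_assoc]
  exact repr_ι_mul_of_forall_ne Z fun v h => hb (FreeMonoid.eq_of_of_mul_eq_of_mul h).symm

theorem repr_pow_mul_of_mul_eq_zero (hZ : Commute (ι R a) Z) {b : X} (hb : b ≠ a) (k : ℕ)
    (s : FreeMonoid X) :
    (basisFreeMonoid R X).repr Z (.of a ^ k * (.of b * s)) = 0 := by
  induction k generalizing s with
  | zero => rw [pow_zero, one_mul]; exact repr_of_mul_eq_zero hZ hb s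
  | succ k ih =>
    rw [pow_succ', mul_assoc, repr_of_mul_eq_repr_mul_of hZ, mul_assoc, mul_assoc]
    exact ih _

theorem eq_zero_of_commute_of_repr_pow_eq_zero (hZ : Commute (ι R a) Z)
    (h : ∀ m, (basisFreeMonoid R X).repr Z (.of a ^ m) = 0) : Z = 0 := by
  refine (basisFreeMonoid R X).repr.injective (Finsupp.ext fun w => ?_)
  rcases FreeMonoid.eq_pow_or_eq_pow_mul_of_mul a w with ⟨m, rfl⟩ | ⟨k, b, s, hb, rfl⟩
  · simpa using h m
  · simpa using repr_pow_mul_of_mul_eq_zero hZ hb k s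

end Centralizer

section toPolynomial

variable [DecidableEq X]

noncomputable def toPolynomial (a : X) : FreeAlgebra R X →ₐ[R] Polynomial R :=
  lift R fun x => if x = a then Polynomial.X else 0

theorem toPolynomial_ι (a x : X) :
    toPolynomial a (ι R x) = if x = a then Polynomial.X else 0 :=
  lift_ι_apply _ _

theorem coeff_toPolynomial_basisFreeMonoid (a : X) (w : FreeMonoid X) (m : ℕ) :
    (toPolynomial a (basisFreeMonoid R X w)).coeff m = Finsupp.single w 1 (.of a ^ m) := by
  induction w using FreeMonoid.inductionOn' generalizing m with
  | one =>
    rw [basisFreeMonoid_one, map_one]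
    cases m with
    | zero => rw [pow_zero, Finsupp.single_eq_same, Polynomial.coeff_one_zero]
    | succ k =>
      rw [pow_succ', Finsupp.single_eq_of_ne (FreeMonoid.of_mul_ne_one a _)]
      exact Polynomial.coeff_one.trans (if_neg k.succ_ne_zero)
  | of_mul x w ih =>
    rw [basisFreeMonoid_mul, basisFreeMonoid_of, map_mul, toPolynomial_ι]
    rcases eq_or_ne x a with rfl | hx
    · cases m with
      | zero =>
        rw [if_pos rfl, Polynomial.coeff_X_mul_zero, pow_zero,
          Finsupp.single_eq_of_ne (FreeMonoid.of_mul_ne_one x _).symm]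
      | succ k =>
        rw [if_pos rfl, Polynomial.coeff_X_mul, ih, pow_succ',
          Finsupp.single_apply_left (mul_right_injective _)]
    · rw [if_neg hx, zero_mul, Polynomial.coeff_zero, Finsupp.single_eq_of_ne]
      cases m with
      | zero => exact (FreeMonoid.of_mul_ne_one x w).symm
      | succ k => rw [pow_succ']; exact fun h => hx (FreeMonoid.eq_of_of_mul_eq_of_mul h).symm

theorem coeff_toPolynomial (a : X) (Z : FreeAlgebra R X) (m : ℕ) :
    (toPolynomial a Z).coeff m = (basisFreeMonoid R X).repr Z (.of a ^ m) := by
  have : (Polynomial.lcoeff R m).comp (toPolynomial a).toLinearMap =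
      (basisFreeMonoid R X).coord (.of a ^ m) :=
    (basisFreeMonoid R X).ext fun w => by simp [coeff_toPolynomial_basisFreeMonoid]
  exact congr($this Z)

theorem eq_zero_of_commute_of_toPolynomial_eq_zero {a : X} {Z : FreeAlgebra R X}
    (hZ : Commute (ι R a) Z) (h : toPolynomial a Z = 0) : Z = 0 :=
  eq_zero_of_commute_of_repr_pow_eq_zero hZ fun m => by
    rw [← coeff_toPolynomial, h, Polynomial.coeff_zero]

end toPolynomial

noncomputable def adAlgHom : FreeAlgebra R X →ₐ[R] Module.End R (FreeAlgebra R X) :=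
  lift R fun x => LieAlgebra.ad R _ (ι R x)

@[simp]
theorem adAlgHom_ι (x : X) (z : FreeAlgebra R X) : adAlgHom (ι R x) z = ⁅ι R x, z⁆ := by
  rw [adAlgHom, lift_ι_apply, LieAlgebra.ad_apply]

theorem adAlgHom_apply_of_mem_lieSpan {Q : FreeAlgebra R X}
    (hQ : Q ∈ LieSubalgebra.lieSpan R (FreeAlgebra R X) (Set.range (ι R))) (z : FreeAlgebra R X) :
    adAlgHom Q z = ⁅Q, z⁆ := by
  induction hQ using LieSubalgebra.lieSpan_induction generalizing z with
  | mem x hx => obtain ⟨x, rfl⟩ := hx; exact adAlgHom_ι x z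
  | zero => simp
  | add x y _ _ hx hy => simp [hx, hy]
  | smul t x _ hx => simp [hx]
  | lie x y _ _ hx hy =>
    rw [lie_lie, ← hy z, ← hx (adAlgHom y z), ← hx z, ← hy (adAlgHom x z), Ring.lie_def x y,
      map_sub, map_mul, map_mul]
    rfl

theorem adAlgHom_lie_ι_apply_ι (a : X) (P : FreeAlgebra R X) :
    adAlgHom ⁅ι R a, P⁆ (ι R a) = ⁅ι R a, adAlgHom P (ι R a)⁆ := by
  rw [Ring.lie_def (ι R a), map_sub, map_mul, map_mul, LinearMap.sub_apply, Module.End.mul_apply,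
    Module.End.mul_apply, adAlgHom_ι, adAlgHom_ι, lie_self, map_zero, sub_zero]

theorem map_adAlgHom_apply {B : Type*} [CommRing B] [Algebra R B] (f : FreeAlgebra R X →ₐ[R] B)
    (P z : FreeAlgebra R X) : f (adAlgHom P z) = algebraMapInv P • f z := by
  induction P using FreeAlgebra.induction generalizing z with
  | grade0 r => simp [Algebra.algebraMap_eq_smul_one]
  | grade1 x => simp [map_lie_eq_zero, algebraMapInv]
  | mul P Q hP hQ => simp [hP, hQ, mul_smul]
  | add P Q hP hQ => simp [hP, hQ, add_smul]

end FreeAlgebra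

open FreeAlgebra

theorem rword_cons {X : Type*} (x : X) {l : List X} (hl : l ≠ []) :
    rword (x :: l) = ⁅ι ℚ x, rword l⁆ := by
  obtain ⟨y, ys, rfl⟩ := List.exists_cons_of_ne_nil hl
  rfl

theorem adAlgHom_basisFreeMonoid_apply_ι {X : Type*} (w : FreeMonoid X) (a : X) :
    adAlgHom (basisFreeMonoid ℚ X w) (ι ℚ a) = rword (w.toList ++ [a]) := by
  induction w using FreeMonoid.inductionOn' with
  | one => rw [basisFreeMonoid_one, map_one]; rfl
  | of_mul x w ih =>
    rw [basisFreeMonoid_mul, basisFreeMonoid_of, map_mul, Module.End.mul_apply, ih, adAlgHom_ι,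
      FreeMonoid.toList_of_mul, List.cons_append, rword_cons x (by simp)]

theorem rmap_mul_ι {X : Type*} (P : FreeAlgebra ℚ X) (a : X) :
    rmap X (P * ι ℚ a) = adAlgHom P (ι ℚ a) := by
  have : (rmap X).comp (LinearMap.mulRight ℚ (ι ℚ a)) =
      (LinearMap.applyₗ (ι ℚ a)).comp (adAlgHom (R := ℚ) (X := X)).toLinearMap :=
    (basisFreeMonoid ℚ X).ext fun w => by
      rw [LinearMap.comp_apply, LinearMap.mulRight_apply, ← basisFreeMonoid_of,
        ← basisFreeMonoid_mul, rmap, Module.Basis.constr_basis, LinearMap.comp_apply,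
        AlgHom.toLinearMap_apply, LinearMap.applyₗ_apply_apply, basisFreeMonoid_of,
        adAlgHom_basisFreeMonoid_apply_ι]
      rfl
  exact congr($this P)

theorem algebraMapInv_eq_zero_of_isHomogeneous {X : Type*} {n : ℕ} (hn : n ≠ 0)
    {P : FreeAlgebra ℚ X} (hP : IsHomogeneous n P) : algebraMapInv P = 0 := by
  induction hP using Submodule.span_induction with
  | mem _ hw =>
    obtain ⟨w, hw, rfl⟩ := hw
    obtain ⟨x, l, rfl⟩ := List.exists_cons_of_ne_nil (List.ne_nil_of_length_pos (hw ▸ hn.bot_lt))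
    simp [algebraMapInv]
  | zero => exact map_zero _
  | add _ _ _ _ hP hQ => rw [map_add, hP, hQ, add_zero]
  | smul t _ _ hP => rw [map_smul, hP, smul_zero]

theorem stmt_11_general {X : Type*} (a : X) (n : ℕ) (hn : 1 ≤ n) (P : FreeAlgebra ℚ X)
    (hHom : IsHomogeneous n P)
    (hLie : IsLiePolynomial ⁅FreeAlgebra.ι ℚ a, P⁆) :
    ⁅FreeAlgebra.ι ℚ a, P⁆ = -(rmap X (P * FreeAlgebra.ι ℚ a)) := by
  classical
  have hQR : ⁅⁅ι ℚ a, P⁆, ι ℚ a⁆ = ⁅ι ℚ a, rmap X (P * ι ℚ a)⁆ := by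
    rw [← adAlgHom_apply_of_mem_lieSpan hLie, adAlgHom_lie_ι_apply_ι, rmap_mul_ι]
  have hcomm : Commute (ι ℚ a) (⁅ι ℚ a, P⁆ + rmap X (P * ι ℚ a)) := by
    rw [commute_iff_lie_eq, lie_add, ← hQR, ← lie_skew, neg_add_cancel]
  have hpoly : toPolynomial a (⁅ι ℚ a, P⁆ + rmap X (P * ι ℚ a)) = 0 := by
    rw [map_add, map_lie_eq_zero, rmap_mul_ι, map_adAlgHom_apply,
      algebraMapInv_eq_zero_of_isHomogeneous (by omega) hHom, zero_smul, add_zero]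
  exact eq_neg_of_add_eq_zero_left (eq_zero_of_commute_of_toPolynomial_eq_zero hcomm hpoly)

/-- If `P` is homogeneous of degree `n ≥ 1` with vanishing coefficient of `a^n`, and
`[ι a, P]` is a Lie polynomial, then `[ι a, P] = −r(P · ι a)`. -/
theorem stmt_11 {X : Type*} (a : X) (n : ℕ) (hn : 1 ≤ n) (P : FreeAlgebra ℚ X)
    (hHom : IsHomogeneous n P)
    (hcoeff : coeffWord P (FreeMonoid.ofList (List.replicate n a)) = 0)
    (hLie : IsLiePolynomial ⁅FreeAlgebra.ι ℚ a, P⁆) :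
    ⁅FreeAlgebra.ι ℚ a, P⁆ = -(rmap X (P * FreeAlgebra.ι ℚ a)) :=
  stmt_11_general a n hn P hHom hLie
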